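/- arXiv:2006.03337 — 2 statements merged into one kernel-verified Lean document; each statement's English description precedes it below -/
import Mathlib

section
/- ∫_e^∞ ((log t - 1)/t^{3/2}) · (1/(2π) + 3/(log t)) dt ≤ (3π√e · Ei(-1/2) + 6π + 2)/(π√e), where Ei is the exponential integral; in particular this integral is less than 2.346. -/
open Real MeasureTheory Set Filter

/-- The exponential integral `Ei(x) = -∫_{-x}^∞ e^{-t}/t dt`. -/
noncomputable def expIntegralEi (x : ℝ) : ℝ := -∫ t in Set.Ioi (-x), Real.exp (-t) / t


lemma exp_poly_integral (d0 d1 d2 d3 d4 d5 d6 d7 a b : ℝ) :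
    (∫ t in a..b, (((d0-d1) + (d1-2*d2)*t + (d2-3*d3)*t^2 + (d3-4*d4)*t^3 + (d4-5*d5)*t^4
        + (d5-6*d6)*t^5 + (d6-7*d7)*t^6 + d7*t^7) * Real.exp (-t)))
      = (d0+d1*a+d2*a^2+d3*a^3+d4*a^4+d5*a^5+d6*a^6+d7*a^7) * Real.exp (-a)
        - (d0+d1*b+d2*b^2+d3*b^3+d4*b^4+d5*b^5+d6*b^6+d7*b^7) * Real.exp (-b) := by
  have he : ∀ t : ℝ, HasDerivAt (fun t : ℝ => Real.exp (-t)) (-Real.exp (-t)) t := by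
    intro t; simpa using (hasDerivAt_id t).neg.exp
  have key : ∀ t : ℝ, HasDerivAt
      (fun t => -(d0 + d1*t^1 + d2*t^2 + d3*t^3 + d4*t^4 + d5*t^5 + d6*t^6 + d7*t^7) * Real.exp (-t))
      (((d0-d1) + (d1-2*d2)*t + (d2-3*d3)*t^2 + (d3-4*d4)*t^3 + (d4-5*d5)*t^4
        + (d5-6*d6)*t^5 + (d6-7*d7)*t^6 + d7*t^7) * Real.exp (-t)) t := by
    intro t
    have hpoly := (((((((hasDerivAt_const t d0).fun_add ((hasDerivAt_pow 1 t).const_mul d1)).fun_add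
      ((hasDerivAt_pow 2 t).const_mul d2)).fun_add ((hasDerivAt_pow 3 t).const_mul d3)).fun_add
      ((hasDerivAt_pow 4 t).const_mul d4)).fun_add ((hasDerivAt_pow 5 t).const_mul d5)).fun_add
      ((hasDerivAt_pow 6 t).const_mul d6)).fun_add ((hasDerivAt_pow 7 t).const_mul d7)
    refine (hpoly.fun_neg.fun_mul (he t)).congr_deriv ?_
    push_cast
    ring
  rw [intervalIntegral.integral_eq_sub_of_hasDerivAt (fun t _ => key t) ?_]
  · ring
  · apply Continuous.intervalIntegrable
    exact (by continuity : Continuous fun t : ℝ => ((d0-d1) + (d1-2*d2)*t + (d2-3*d3)*t^2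
      + (d3-4*d4)*t^3 + (d4-5*d5)*t^4 + (d5-6*d6)*t^5 + (d6-7*d7)*t^6 + d7*t^7)).mul
      (Real.continuous_exp.comp continuous_neg)

lemma interval_lb (d0 d1 d2 d3 d4 d5 d6 d7 a b m Qa Qb : ℝ)
    (hab : a ≤ b) (ha : 1/2 ≤ a)
    (hQa : d0+d1*a+d2*a^2+d3*a^3+d4*a^4+d5*a^5+d6*a^6+d7*a^7 = Qa)
    (hQb : d0+d1*b+d2*b^2+d3*b^3+d4*b^4+d5*b^5+d6*b^6+d7*b^7 = Qb)
    (hkey : ∀ t : ℝ, (((d0-d1) + (d1-2*d2)*t + (d2-3*d3)*t^2 + (d3-4*d4)*t^3 + (d4-5*d5)*t^4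
        + (d5-6*d6)*t^5 + (d6-7*d7)*t^6 + d7*t^7)) * t = 1 - ((t-m)/m)^8) :
    Qa * Real.exp (-a) - Qb * Real.exp (-b) ≤ ∫ t in a..b, Real.exp (-t)/t := by
  rw [← hQa, ← hQb, ← exp_poly_integral d0 d1 d2 d3 d4 d5 d6 d7 a b]
  apply intervalIntegral.integral_mono_on hab
  · apply Continuous.intervalIntegrable
    exact (by continuity : Continuous fun t : ℝ => ((d0-d1) + (d1-2*d2)*t + (d2-3*d3)*t^2
      + (d3-4*d4)*t^3 + (d4-5*d5)*t^4 + (d5-6*d6)*t^5 + (d6-7*d7)*t^6 + d7*t^7)).mul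
      (Real.continuous_exp.comp continuous_neg)
  · apply ContinuousOn.intervalIntegrable
    apply ContinuousOn.div (Real.continuous_exp.comp continuous_neg).continuousOn continuousOn_id
    intro x hx
    rw [Set.uIcc_of_le hab] at hx
    have : (0:ℝ) < x := by linarith [hx.1]
    exact this.ne'
  · intro t ht
    have ht0 : (0:ℝ) < t := by linarith [ht.1]
    have h1 : ((d0-d1) + (d1-2*d2)*t + (d2-3*d3)*t^2 + (d3-4*d4)*t^3 + (d4-5*d5)*t^4
        + (d5-6*d6)*t^5 + (d6-7*d7)*t^6 + d7*t^7) ≤ 1/t := by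
      rw [le_div_iff₀ ht0]
      have h8 : (0:ℝ) ≤ ((t-m)/m)^8 := by positivity
      linarith [hkey t]
    have := mul_le_mul_of_nonneg_right h1 (Real.exp_nonneg (-t))
    calc ((d0-d1) + (d1-2*d2)*t + (d2-3*d3)*t^2 + (d3-4*d4)*t^3 + (d4-5*d5)*t^4
        + (d5-6*d6)*t^5 + (d6-7*d7)*t^6 + d7*t^7) * Real.exp (-t)
        ≤ (1/t) * Real.exp (-t) := this
      _ = Real.exp (-t)/t := by ring

lemma abs_quarter : |(-(1/4):ℝ)| = 1/4 := by
  rw [abs_neg, abs_of_nonneg (by norm_num : (0:ℝ) ≤ 1/4)]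

lemma exp_quarter_lb : (2145835576088113/2755307419729920 : ℝ) ≤ Real.exp (-(1/4)) ∧ Real.exp (-(1/4)) ≤ (75104245163083981/96435759690547200 : ℝ) := by
  have h := Real.exp_bound (x := -(1/4:ℝ)) (by rw [abs_quarter]; norm_num) (n := 12) (by norm_num)
  have hs : (∑ m ∈ Finset.range 12, (-(1/4):ℝ)^m / m.factorial) = (130389314519243/167423193907200 : ℝ) := by
    simp [Finset.sum_range_succ, Nat.factorial]
    norm_num
  rw [hs, abs_quarter] at h
  norm_num [Nat.factorial] at h
  have := abs_le.mp h
  constructor <;> linarith [this.1, this.2]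

lemma himg : Real.exp '' (Set.Ioi (1:ℝ)) = Set.Ioi (Real.exp 1) := by
  ext x
  constructor
  · rintro ⟨u, hu, rfl⟩
    exact Real.exp_lt_exp.mpr hu
  · intro hx
    have hx0 : (0:ℝ) < x := lt_trans (Real.exp_pos 1) hx
    exact ⟨Real.log x, (Real.lt_log_iff_exp_lt hx0).mpr hx, Real.exp_log hx0⟩

lemma hexp_half_tendsto : Tendsto (fun u : ℝ => Real.exp (-(u/2))) atTop (nhds 0) := by
  exact Real.tendsto_exp_neg_atTop_nhds_zero.comp
    (Filter.Tendsto.atTop_div_const (by norm_num) tendsto_id)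

lemma htendsto1 : Tendsto (fun u : ℝ => -(2*u+2)*Real.exp (-(u/2))) atTop (nhds 0) := by
  have h1 : Tendsto (fun v : ℝ => -4*(v^1*Real.exp (-v)) + -2*Real.exp (-v)) atTop (nhds 0) := by
    have := ((Real.tendsto_pow_mul_exp_neg_atTop_nhds_zero 1).const_mul (-4)).add
      (Real.tendsto_exp_neg_atTop_nhds_zero.const_mul (-2))
    simpa using this
  have h2 : Tendsto (fun u : ℝ => u/2) atTop atTop := Filter.Tendsto.atTop_div_const (by norm_num) tendsto_id
  have := h1.comp h2
  apply this.congr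
  intro u
  simp only [Function.comp_apply]
  ring

lemma hd_half (u : ℝ) : HasDerivAt (fun u : ℝ => Real.exp (-(u/2))) (Real.exp (-(u/2)) * (-(1/2))) u := by
  have h1 : HasDerivAt (fun u : ℝ => -(u/2)) (-(1/2)) u := by
    simpa using ((hasDerivAt_id u).div_const 2).fun_neg
  exact h1.exp

lemma hd1 (u : ℝ) : HasDerivAt (fun u : ℝ => -(2*u+2)*Real.exp (-(u/2))) ((u-1)*Real.exp (-(u/2))) u := by
  have h3 : HasDerivAt (fun u : ℝ => -(2*u+2)) (-2) u := by
    simpa using (((hasDerivAt_id u).const_mul 2).add_const 2).fun_neg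
  have := h3.fun_mul (hd_half u)
  refine this.congr_deriv ?_
  ring

lemma hd2 (u : ℝ) : HasDerivAt (fun u : ℝ => -2*Real.exp (-(u/2))) (Real.exp (-(u/2))) u := by
  have := (hd_half u).const_mul (-2)
  refine this.congr_deriv ?_
  ring

lemma I1val : ∫ u in Set.Ioi (1:ℝ), (u-1)*Real.exp (-(u/2)) = 4*Real.exp (-(1/2)) := by
  have h := integral_Ioi_of_hasDerivAt_of_nonneg' (a := 1) (g := fun u : ℝ => -(2*u+2)*Real.exp (-(u/2)))
    (fun x _ => hd1 x) (fun x hx => mul_nonneg (by linarith [hx.out]) (Real.exp_nonneg _)) htendsto1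
  rw [h]
  norm_num

lemma I2val : ∫ u in Set.Ioi (1:ℝ), Real.exp (-(u/2)) = 2*Real.exp (-(1/2)) := by
  have h := integral_Ioi_of_hasDerivAt_of_nonneg' (a := 1) (g := fun u : ℝ => -2*Real.exp (-(u/2)))
    (fun x _ => hd2 x) (fun x _ => Real.exp_nonneg _) (by simpa using hexp_half_tendsto.const_mul (-2))
  rw [h]
  norm_num

lemma i1 : IntegrableOn (fun u : ℝ => (u-1)*Real.exp (-(u/2))) (Set.Ioi (1:ℝ)) := by
  exact integrableOn_Ioi_deriv_of_nonneg' (a := 1) (fun x _ => hd1 x)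
    (fun x hx => mul_nonneg (by linarith [hx.out]) (Real.exp_nonneg _)) htendsto1

lemma i2 : IntegrableOn (fun u : ℝ => Real.exp (-(u/2))) (Set.Ioi (1:ℝ)) := by
  have := (exp_neg_integrableOn_Ioi 1 (by norm_num : (0:ℝ) < 1/2))
  apply this.congr_fun _ measurableSet_Ioi
  intro x _
  show Real.exp (-(1/2)*x) = Real.exp (-(x/2))
  exact congrArg Real.exp (by ring)

lemma i3 : IntegrableOn (fun u : ℝ => Real.exp (-(u/2))/u) (Set.Ioi (1:ℝ)) := by
  apply Integrable.mono' i2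
  · apply ContinuousOn.aestronglyMeasurable _ measurableSet_Ioi
    apply ContinuousOn.div (by fun_prop) continuousOn_id
    intro x hx
    exact (lt_trans one_pos hx).ne'
  · refine (ae_restrict_iff' measurableSet_Ioi).mpr (Filter.Eventually.of_forall fun x hx => ?_)
    have hx0 : (0:ℝ) < x := lt_trans one_pos hx
    rw [Real.norm_eq_abs, abs_div, abs_of_pos (Real.exp_pos _), abs_of_pos hx0]
    exact div_le_self (Real.exp_nonneg _) (le_of_lt hx.out)

lemma I3val : ∫ u in Set.Ioi (1:ℝ), Real.exp (-(u/2))/u = ∫ t in Set.Ioi (1/2:ℝ), Real.exp (-t)/t := by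
  have h := MeasureTheory.integral_comp_mul_left_Ioi (fun t => Real.exp (-t)/t) 1
    (by norm_num : (0:ℝ) < 1/2)
  simp only [smul_eq_mul] at h
  norm_num at h
  have h2 : ∫ x in Set.Ioi (1:ℝ), Real.exp (-(1/2*x))/(1/2*x)
      = 2 * ∫ u in Set.Ioi (1:ℝ), Real.exp (-(u/2))/u := by
    rw [← MeasureTheory.integral_const_mul]
    apply setIntegral_congr_fun measurableSet_Ioi
    intro x hx
    have hx0 : x ≠ 0 := (lt_trans one_pos hx).ne'
    show Real.exp (-(1/2*x)) / (1/2*x) = 2 * (Real.exp (-(x/2))/x)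
    rw [show -(1/2*x) = -(x/2) by ring]
    field_simp
  linarith [h, h2]

lemma hcongr : (∫ x in Set.Ioi (1:ℝ), |Real.exp x| • ((Real.log (Real.exp x) - 1)/(Real.exp x)^((3:ℝ)/2) * (1/(2*π) + 3/Real.log (Real.exp x))))
    = ∫ u in Set.Ioi (1:ℝ), ((1/(2*π)) * ((u-1)*Real.exp (-(u/2))) + 3*Real.exp (-(u/2)) + (-3)*(Real.exp (-(u/2))/u)) := by
  apply setIntegral_congr_fun measurableSet_Ioi
  intro u hu
  have hu0 : u ≠ 0 := (lt_trans one_pos hu).ne'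
  simp only [Real.log_exp, abs_of_pos (Real.exp_pos u), smul_eq_mul]
  rw [Real.rpow_def_of_pos (Real.exp_pos u), Real.log_exp]
  rw [show Real.exp (u * (3/2)) = Real.exp u / Real.exp (-(u/2)) from by
    rw [eq_div_iff (Real.exp_ne_zero _), ← Real.exp_add]; congr 1; ring]
  have hA := Real.exp_ne_zero u
  have hX := Real.exp_ne_zero (-(u/2))
  field_simp
  ring

lemma hII_lemma : ∀ a b : ℝ, 1/2 ≤ a → 1/2 ≤ b →
    IntervalIntegrable (fun t : ℝ => Real.exp (-t)/t) volume a b := by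
  intro a b ha hb
  apply ContinuousOn.intervalIntegrable
  apply ContinuousOn.div (by fun_prop) continuousOn_id
  intro x hx
  rcases le_total a b with h | h
  · rw [Set.uIcc_of_le h] at hx
    exact (by linarith [hx.1] : (0:ℝ) < x).ne'
  · rw [Set.uIcc_of_ge h] at hx
    exact (by linarith [hx.1] : (0:ℝ) < x).ne'

lemma hIntIoi : IntegrableOn (fun t : ℝ => Real.exp (-t)/t) (Set.Ioi (1/2:ℝ)) := by
  have hbase : IntegrableOn (fun x : ℝ => 2*Real.exp (-x)) (Set.Ioi (1/2:ℝ)) := by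
    have hb2 : IntegrableOn (fun x : ℝ => 2*Real.exp (-1*x)) (Set.Ioi (1/2:ℝ)) :=
      (exp_neg_integrableOn_Ioi (1/2:ℝ) (by norm_num : (0:ℝ) < 1)).const_mul 2
    apply hb2.congr_fun _ measurableSet_Ioi
    intro x _
    show 2 * Real.exp (-1*x) = 2 * Real.exp (-x)
    rw [neg_one_mul]
  apply Integrable.mono' hbase
  · apply ContinuousOn.aestronglyMeasurable _ measurableSet_Ioi
    apply ContinuousOn.div (by fun_prop) continuousOn_id
    intro x hx
    exact (lt_trans (by norm_num) hx).ne'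
  · refine (ae_restrict_iff' measurableSet_Ioi).mpr (Filter.Eventually.of_forall fun x hx => ?_)
    have hx0 : (0:ℝ) < x := lt_trans (by norm_num) hx
    rw [Real.norm_eq_abs, abs_div, abs_of_pos (Real.exp_pos _), abs_of_pos hx0, div_le_iff₀ hx0]
    nlinarith [Real.exp_pos (-x), hx.out]

lemma hup_lemma : (∫ t in (1/2:ℝ)..(14:ℝ), Real.exp (-t)/t)
    ≤ ∫ t in Set.Ioi (1/2:ℝ), Real.exp (-t)/t := by
  rw [intervalIntegral.integral_of_le (by norm_num)]
  apply setIntegral_mono_set hIntIoi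
  · refine (ae_restrict_iff' measurableSet_Ioi).mpr (Filter.Eventually.of_forall fun x hx => ?_)
    exact div_nonneg (Real.exp_nonneg _) (le_of_lt (lt_trans (by norm_num) hx))
  · exact HasSubset.Subset.eventuallyLE Set.Ioc_subset_Ioi_self

lemma J_lb (hII : ∀ a b : ℝ, 1/2 ≤ a → 1/2 ≤ b → IntervalIntegrable (fun t : ℝ => Real.exp (-t)/t) volume a b)
    (hup : (∫ t in (1/2:ℝ)..(14:ℝ), Real.exp (-t)/t) ≤ ∫ t in Set.Ioi (1/2:ℝ), Real.exp (-t)/t) :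
    (5597734/10000000 : ℝ) ≤ ∫ t in Set.Ioi (1/2:ℝ), Real.exp (-t)/t := by
  set c : ℝ := Real.exp (-(1/4)) with hc
  obtain ⟨hclo, hchi⟩ := exp_quarter_lb
  rw [← hc] at hclo hchi
  have E2 : Real.exp (-(1/2 : ℝ)) = c^2 := by rw [hc, ← Real.exp_nat_mul]; congr 1; norm_num
  have hl2 : (3032653298563165117365603/5000000000000000000000000 : ℝ) ≤ c^2 := le_trans (by norm_num) (pow_le_pow_left₀ (by norm_num) hclo 2)
  have hh2 : c^2 ≤ (3032653298563167217086747/5000000000000000000000000 : ℝ) := le_trans (pow_le_pow_left₀ (Real.exp_nonneg _) hchi 2) (by norm_num)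
  have E3 : Real.exp (-(3/4 : ℝ)) = c^3 := by rw [hc, ← Real.exp_nat_mul]; congr 1; norm_num
  have hl3 : (2361832763705071198524587/5000000000000000000000000 : ℝ) ≤ c^3 := le_trans (by norm_num) (pow_le_pow_left₀ (by norm_num) hclo 3)
  have hh3 : c^3 ≤ (4723665527410147302842587/10000000000000000000000000 : ℝ) := le_trans (pow_le_pow_left₀ (Real.exp_nonneg _) hchi 3) (by norm_num)
  have E4 : Real.exp (-(1 : ℝ)) = c^4 := by rw [hc, ← Real.exp_nat_mul]; congr 1; norm_num
  have hl4 : (459849301464302295265593/1250000000000000000000000 : ℝ) ≤ c^4 := le_trans (by norm_num) (pow_le_pow_left₀ (by norm_num) hclo 4)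
  have hh4 : c^4 ≤ (1839397205857211728152873/5000000000000000000000000 : ℝ) := le_trans (pow_le_pow_left₀ (Real.exp_nonneg _) hchi 4) (by norm_num)
  have E6 : Real.exp (-(3/2 : ℝ)) = c^6 := by rw [hc, ← Real.exp_nat_mul]; congr 1; norm_num
  have hl6 : (278912700185536734167161/1250000000000000000000000 : ℝ) ≤ c^6 := le_trans (by norm_num) (pow_le_pow_left₀ (by norm_num) hclo 6)
  have hh6 : c^6 ≤ (1115650800742149254001367/5000000000000000000000000 : ℝ) := le_trans (pow_le_pow_left₀ (Real.exp_nonneg _) hchi 6) (by norm_num)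
  have E8 : Real.exp (-(2 : ℝ)) = c^8 := by rw [hc, ← Real.exp_nat_mul]; congr 1; norm_num
  have hl8 : (169169104045765418461387/1250000000000000000000000 : ℝ) ≤ c^8 := le_trans (by norm_num) (pow_le_pow_left₀ (by norm_num) hclo 8)
  have hh8 : c^8 ≤ (1353352832366127095780017/10000000000000000000000000 : ℝ) := le_trans (pow_le_pow_left₀ (Real.exp_nonneg _) hchi 8) (by norm_num)
  have E12 : Real.exp (-(3 : ℝ)) = c^12 := by rw [hc, ← Real.exp_nat_mul]; congr 1; norm_num
  have hl12 : (9957413673572749182197/200000000000000000000000 : ℝ) ≤ c^12 := le_trans (by norm_num) (pow_le_pow_left₀ (by norm_num) hclo 12)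
  have hh12 : c^12 ≤ (497870683678639527377137/10000000000000000000000000 : ℝ) := le_trans (pow_le_pow_left₀ (Real.exp_nonneg _) hchi 12) (by norm_num)
  have E16 : Real.exp (-(4 : ℝ)) = c^16 := by rw [hc, ← Real.exp_nat_mul]; congr 1; norm_num
  have hl16 : (183156388887340836305217/10000000000000000000000000 : ℝ) ≤ c^16 := le_trans (by norm_num) (pow_le_pow_left₀ (by norm_num) hclo 16)
  have hh16 : c^16 ≤ (183156388887341850802569/10000000000000000000000000 : ℝ) := le_trans (pow_le_pow_left₀ (Real.exp_nonneg _) hchi 16) (by norm_num)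
  have E24 : Real.exp (-(6 : ℝ)) = c^24 := by rw [hc, ← Real.exp_nat_mul]; congr 1; norm_num
  have hl24 : (3098440220832923500167/1250000000000000000000000 : ℝ) ≤ c^24 := le_trans (by norm_num) (pow_le_pow_left₀ (by norm_num) hclo 24)
  have hh24 : c^24 ≤ (12393760883331796973633/5000000000000000000000000 : ℝ) := le_trans (pow_le_pow_left₀ (Real.exp_nonneg _) hchi 24) (by norm_num)
  have E32 : Real.exp (-(8 : ℝ)) = c^32 := by rw [hc, ← Real.exp_nat_mul]; congr 1; norm_num
  have hl32 : (3354626279025082979249/10000000000000000000000000 : ℝ) ≤ c^32 := le_trans (by norm_num) (pow_le_pow_left₀ (by norm_num) hclo 32)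
  have hh32 : c^32 ≤ (670925255805024028317/2000000000000000000000000 : ℝ) := le_trans (pow_le_pow_left₀ (Real.exp_nonneg _) hchi 32) (by norm_num)
  have E44 : Real.exp (-(11 : ℝ)) = c^44 := by rw [hc, ← Real.exp_nat_mul]; congr 1; norm_num
  have hl44 : (167017007902454169127/10000000000000000000000000 : ℝ) ≤ c^44 := le_trans (by norm_num) (pow_le_pow_left₀ (by norm_num) hclo 44)
  have hh44 : c^44 ≤ (83508503951228356579/5000000000000000000000000 : ℝ) := le_trans (pow_le_pow_left₀ (Real.exp_nonneg _) hchi 44) (by norm_num)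
  have E56 : Real.exp (-(14 : ℝ)) = c^56 := by rw [hc, ← Real.exp_nat_mul]; congr 1; norm_num
  have hl56 : (8315287191035525243/10000000000000000000000000 : ℝ) ≤ c^56 := le_trans (by norm_num) (pow_le_pow_left₀ (by norm_num) hclo 56)
  have hh56 : c^56 ≤ (8315287191035686447/10000000000000000000000000 : ℝ) := le_trans (pow_le_pow_left₀ (Real.exp_nonneg _) hchi 56) (by norm_num)
  have hI0 : (-68577061696/390625 : ℝ) * Real.exp (-(1/2 : ℝ)) - (-17610974336/78125 : ℝ) * Real.exp (-(3/4 : ℝ)) ≤ ∫ t in (1/2 : ℝ)..(3/4 : ℝ), Real.exp (-t)/t :=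
    interval_lb (-8318652608/78125 : ℝ) (-8319652608/78125 : ℝ) (-4157026304/78125 : ℝ) (-1391648768/78125 : ℝ) (-338952192/78125 : ℝ) (-384827392/390625 : ℝ) (-33554432/390625 : ℝ) (-16777216/390625 : ℝ) (1/2 : ℝ) (3/4 : ℝ) (5/8 : ℝ) (-68577061696/390625 : ℝ) (-17610974336/78125 : ℝ) (by norm_num) (by norm_num) (by norm_num) (by norm_num) (fun t => by ring)
  rw [E2, E3] at hI0
  have hI1 : (-66452875264/5764801 : ℝ) * Real.exp (-(3/4 : ℝ)) - (-85329076288/5764801 : ℝ) * Real.exp (-(1 : ℝ)) ≤ ∫ t in (3/4 : ℝ)..(1 : ℝ), Real.exp (-t)/t :=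
    interval_lb (-91482304/16807 : ℝ) (-91635968/16807 : ℝ) (-45510656/16807 : ℝ) (-15638528/16807 : ℝ) (-3407872/16807 : ℝ) (-1048576/16807 : ℝ) (0 : ℝ) (-16777216/5764801 : ℝ) (3/4 : ℝ) (1 : ℝ) (7/8 : ℝ) (-66452875264/5764801 : ℝ) (-85329076288/5764801 : ℝ) (by norm_num) (by norm_num) (by norm_num) (by norm_num) (fun t => by ring)
  rw [E3, E4] at hI1
  have hI2 : (-43758176/78125 : ℝ) * Real.exp (-(1 : ℝ)) - (-360934144/390625 : ℝ) * Real.exp (-(3/2 : ℝ)) ≤ ∫ t in (1 : ℝ)..(3/2 : ℝ), Real.exp (-t)/t :=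
    interval_lb (-15954848/78125 : ℝ) (-16454848/78125 : ℝ) (-7527424/78125 : ℝ) (-3255808/78125 : ℝ) (-253952/78125 : ℝ) (-1687552/390625 : ℝ) (196608/390625 : ℝ) (-65536/390625 : ℝ) (1 : ℝ) (3/2 : ℝ) (5/4 : ℝ) (-43758176/78125 : ℝ) (-360934144/390625 : ℝ) (by norm_num) (by norm_num) (by norm_num) (by norm_num) (fun t => by ring)
  rw [E4, E6] at hI2
  have hI3 : (-204429760/5764801 : ℝ) * Real.exp (-(3/2 : ℝ)) - (-339225184/5764801 : ℝ) * Real.exp (-(2 : ℝ)) ≤ ∫ t in (3/2 : ℝ)..(2 : ℝ), Real.exp (-t)/t :=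
    interval_lb (-5149216/823543 : ℝ) (-8913984/823543 : ℝ) (-692224/823543 : ℝ) (-3099136/823543 : ℝ) (761856/823543 : ℝ) (-409600/823543 : ℝ) (65536/823543 : ℝ) (-65536/5764801 : ℝ) (3/2 : ℝ) (2 : ℝ) (7/4 : ℝ) (-204429760/5764801 : ℝ) (-339225184/5764801 : ℝ) (by norm_num) (by norm_num) (by norm_num) (by norm_num) (fun t => by ring)
  rw [E6, E8] at hI3
  have hI4 : (-88256/78125 : ℝ) * Real.exp (-(2 : ℝ)) - (-1480816/390625 : ℝ) * Real.exp (-(3 : ℝ)) ≤ ∫ t in (2 : ℝ)..(3 : ℝ), Real.exp (-t)/t :=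
    interval_lb (99232/78125 : ℝ) (-150768/78125 : ℝ) (99616/78125 : ℝ) (-60128/78125 : ℝ) (19968/78125 : ℝ) (-24832/390625 : ℝ) (3328/390625 : ℝ) (-256/390625 : ℝ) (2 : ℝ) (3 : ℝ) (5/2 : ℝ) (-88256/78125 : ℝ) (-1480816/390625 : ℝ) (by norm_num) (by norm_num) (by norm_num) (by norm_num) (fun t => by ring)
  rw [E8, E12] at hI4
  have hI5 : (980912/5764801 : ℝ) * Real.exp (-(3 : ℝ)) - (-251008/5764801 : ℝ) * Real.exp (-(4 : ℝ)) ≤ ∫ t in (3 : ℝ)..(4 : ℝ), Real.exp (-t)/t :=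
    interval_lb (1001408/823543 : ℝ) (-880976/823543 : ℝ) (500704/823543 : ℝ) (-191648/823543 : ℝ) (48128/823543 : ℝ) (-7936/823543 : ℝ) (768/823543 : ℝ) (-256/5764801 : ℝ) (3 : ℝ) (4 : ℝ) (7/2 : ℝ) (980912/5764801 : ℝ) (-251008/5764801 : ℝ) (by norm_num) (by norm_num) (by norm_num) (by norm_num) (fun t => by ring)
  rw [E12, E16] at hI5
  have hI6 : (79496/390625 : ℝ) * Real.exp (-(4 : ℝ)) - (9712/78125 : ℝ) * Real.exp (-(6 : ℝ)) ≤ ∫ t in (4 : ℝ)..(6 : ℝ), Real.exp (-t)/t :=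
    interval_lb (76552/78125 : ℝ) (-48448/78125 : ℝ) (19526/78125 : ℝ) (-5158/78125 : ℝ) (898/78125 : ℝ) (-502/390625 : ℝ) (33/390625 : ℝ) (-1/390625 : ℝ) (4 : ℝ) (6 : ℝ) (5 : ℝ) (79496/390625 : ℝ) (9712/78125 : ℝ) (by norm_num) (by norm_num) (by norm_num) (by norm_num) (fun t => by ring)
  rw [E16, E24] at hI6
  have hI7 : (836480/5764801 : ℝ) * Real.exp (-(6 : ℝ)) - (640184/5764801 : ℝ) * Real.exp (-(8 : ℝ)) ≤ ∫ t in (6 : ℝ)..(8 : ℝ), Real.exp (-t)/t :=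
    interval_lb (91832/117649 : ℝ) (-42624/117649 : ℝ) (12302/117649 : ℝ) (-2302/117649 : ℝ) (282/117649 : ℝ) (-22/117649 : ℝ) (1/117649 : ℝ) (-1/5764801 : ℝ) (6 : ℝ) (8 : ℝ) (7 : ℝ) (836480/5764801 : ℝ) (640184/5764801 : ℝ) (by norm_num) (by norm_num) (by norm_num) (by norm_num) (fun t => by ring)
  rw [E24, E32] at hI7
  have hI8 : (1906780544/16983563041 : ℝ) * Real.exp (-(8 : ℝ)) - (1421367920/16983563041 : ℝ) * Real.exp (-(11 : ℝ)) ≤ ∫ t in (8 : ℝ)..(11 : ℝ), Real.exp (-t)/t :=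
    interval_lb (10605717248/16983563041 : ℝ) (-3696230576/16983563041 : ℝ) (786454048/16983563041 : ℝ) (-107612768/16983563041 : ℝ) (9586688/16983563041 : ℝ) (-540928/16983563041 : ℝ) (17664/16983563041 : ℝ) (-256/16983563041 : ℝ) (8 : ℝ) (11 : ℝ) (19/2 : ℝ) (1906780544/16983563041 : ℝ) (1421367920/16983563041 : ℝ) (by norm_num) (by norm_num) (by norm_num) (by norm_num) (fun t => by ring)
  rw [E32, E44] at hI8
  have hI9 : (2558626192/30517578125 : ℝ) * Real.exp (-(11 : ℝ)) - (10210899776/152587890625 : ℝ) * Real.exp (-(14 : ℝ)) ≤ ∫ t in (11 : ℝ)..(14 : ℝ), Real.exp (-t)/t :=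
    interval_lb (15398448352/30517578125 : ℝ) (-4132801648/30517578125 : ℝ) (667974176/30517578125 : ℝ) (-69008608/30517578125 : ℝ) (4622848/30517578125 : ℝ) (-977152/152587890625 : ℝ) (23808/152587890625 : ℝ) (-256/152587890625 : ℝ) (11 : ℝ) (14 : ℝ) (25/2 : ℝ) (2558626192/30517578125 : ℝ) (10210899776/152587890625 : ℝ) (by norm_num) (by norm_num) (by norm_num) (by norm_num) (fun t => by ring)
  rw [E44, E56] at hI9
  have e1 : (∫ t in (1/2 : ℝ)..(3/4 : ℝ), Real.exp (-t)/t) + ∫ t in (3/4 : ℝ)..(14 : ℝ), Real.exp (-t)/t = ∫ t in (1/2 : ℝ)..(14 : ℝ), Real.exp (-t)/t :=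
    intervalIntegral.integral_add_adjacent_intervals (hII _ _ (by norm_num) (by norm_num)) (hII _ _ (by norm_num) (by norm_num))
  have e2 : (∫ t in (3/4 : ℝ)..(1 : ℝ), Real.exp (-t)/t) + ∫ t in (1 : ℝ)..(14 : ℝ), Real.exp (-t)/t = ∫ t in (3/4 : ℝ)..(14 : ℝ), Real.exp (-t)/t :=
    intervalIntegral.integral_add_adjacent_intervals (hII _ _ (by norm_num) (by norm_num)) (hII _ _ (by norm_num) (by norm_num))
  have e3 : (∫ t in (1 : ℝ)..(3/2 : ℝ), Real.exp (-t)/t) + ∫ t in (3/2 : ℝ)..(14 : ℝ), Real.exp (-t)/t = ∫ t in (1 : ℝ)..(14 : ℝ), Real.exp (-t)/t :=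
    intervalIntegral.integral_add_adjacent_intervals (hII _ _ (by norm_num) (by norm_num)) (hII _ _ (by norm_num) (by norm_num))
  have e4 : (∫ t in (3/2 : ℝ)..(2 : ℝ), Real.exp (-t)/t) + ∫ t in (2 : ℝ)..(14 : ℝ), Real.exp (-t)/t = ∫ t in (3/2 : ℝ)..(14 : ℝ), Real.exp (-t)/t :=
    intervalIntegral.integral_add_adjacent_intervals (hII _ _ (by norm_num) (by norm_num)) (hII _ _ (by norm_num) (by norm_num))
  have e5 : (∫ t in (2 : ℝ)..(3 : ℝ), Real.exp (-t)/t) + ∫ t in (3 : ℝ)..(14 : ℝ), Real.exp (-t)/t = ∫ t in (2 : ℝ)..(14 : ℝ), Real.exp (-t)/t :=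
    intervalIntegral.integral_add_adjacent_intervals (hII _ _ (by norm_num) (by norm_num)) (hII _ _ (by norm_num) (by norm_num))
  have e6 : (∫ t in (3 : ℝ)..(4 : ℝ), Real.exp (-t)/t) + ∫ t in (4 : ℝ)..(14 : ℝ), Real.exp (-t)/t = ∫ t in (3 : ℝ)..(14 : ℝ), Real.exp (-t)/t :=
    intervalIntegral.integral_add_adjacent_intervals (hII _ _ (by norm_num) (by norm_num)) (hII _ _ (by norm_num) (by norm_num))
  have e7 : (∫ t in (4 : ℝ)..(6 : ℝ), Real.exp (-t)/t) + ∫ t in (6 : ℝ)..(14 : ℝ), Real.exp (-t)/t = ∫ t in (4 : ℝ)..(14 : ℝ), Real.exp (-t)/t :=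
    intervalIntegral.integral_add_adjacent_intervals (hII _ _ (by norm_num) (by norm_num)) (hII _ _ (by norm_num) (by norm_num))
  have e8 : (∫ t in (6 : ℝ)..(8 : ℝ), Real.exp (-t)/t) + ∫ t in (8 : ℝ)..(14 : ℝ), Real.exp (-t)/t = ∫ t in (6 : ℝ)..(14 : ℝ), Real.exp (-t)/t :=
    intervalIntegral.integral_add_adjacent_intervals (hII _ _ (by norm_num) (by norm_num)) (hII _ _ (by norm_num) (by norm_num))
  have e9 : (∫ t in (8 : ℝ)..(11 : ℝ), Real.exp (-t)/t) + ∫ t in (11 : ℝ)..(14 : ℝ), Real.exp (-t)/t = ∫ t in (8 : ℝ)..(14 : ℝ), Real.exp (-t)/t :=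
    intervalIntegral.integral_add_adjacent_intervals (hII _ _ (by norm_num) (by norm_num)) (hII _ _ (by norm_num) (by norm_num))
  linarith [hup, hI0, hI1, hI2, hI3, hI4, hI5, hI6, hI7, hI8, hI9, e1, e2, e3, e4, e5, e6, e7, e8, e9, hl2, hh2, hl3, hh3, hl4, hh4, hl6, hh6, hl8, hh8, hl12, hh12, hl16, hh16, hl24, hh24, hl32, hh32, hl44, hh44, hl56, hh56]


/-- `∫_e^∞ ((log t - 1)/t^{3/2})(1/(2π) + 3/log t) dt
      ≤ (3π√e·Ei(-1/2) + 6π + 2)/(π√e) < 2.346`. -/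
theorem integral_log_term_le :
    (∫ t in Set.Ioi (Real.exp 1),
        (Real.log t - 1) / t ^ ((3 : ℝ) / 2) * (1 / (2 * π) + 3 / Real.log t)) ≤
      (3 * π * Real.sqrt (Real.exp 1) * expIntegralEi (-(1 / 2)) + 6 * π + 2) /
        (π * Real.sqrt (Real.exp 1)) ∧
    (∫ t in Set.Ioi (Real.exp 1),
        (Real.log t - 1) / t ^ ((3 : ℝ) / 2) * (1 / (2 * π) + 3 / Real.log t)) < 2.346 := by
  have hJ := J_lb hII_lemma hup_lemma
  have hEi : expIntegralEi (-(1/2)) = -∫ t in Set.Ioi (1/2:ℝ), Real.exp (-t)/t := by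
    rw [expIntegralEi]
    norm_num
  have hmain : (∫ t in Set.Ioi (Real.exp 1),
        (Real.log t - 1) / t ^ ((3 : ℝ) / 2) * (1 / (2 * π) + 3 / Real.log t))
      = (1/(2*π))*(4*Real.exp (-(1/2))) + 3*(2*Real.exp (-(1/2)))
        + (-3)*∫ t in Set.Ioi (1/2:ℝ), Real.exp (-t)/t := by
    rw [← himg, MeasureTheory.integral_image_eq_integral_abs_deriv_smul measurableSet_Ioi
      (fun x _ => (Real.hasDerivAt_exp x).hasDerivWithinAt) Real.exp_injective.injOn]
    rw [hcongr]
    rw [MeasureTheory.integral_add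
          (f := fun u : ℝ => (1/(2*π)) * ((u-1)*Real.exp (-(u/2))) + 3*Real.exp (-(u/2)))
          (g := fun u : ℝ => (-3)*(Real.exp (-(u/2))/u))
          ((i1.const_mul _).add (i2.const_mul _)) (i3.const_mul _),
        MeasureTheory.integral_add
          (f := fun u : ℝ => (1/(2*π)) * ((u-1)*Real.exp (-(u/2))))
          (g := fun u : ℝ => 3*Real.exp (-(u/2)))
          (i1.const_mul _) (i2.const_mul _),
        MeasureTheory.integral_const_mul, MeasureTheory.integral_const_mul,
        MeasureTheory.integral_const_mul, I1val, I2val, I3val]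
  have hsq : Real.sqrt (Real.exp 1) = Real.exp (1/2) := by
    have h : Real.exp ((1/2):ℝ)^2 = Real.exp 1 := by
      rw [sq, ← Real.exp_add]
      norm_num
    rw [← h, Real.sqrt_sq (Real.exp_pos _).le]
  constructor
  · rw [hmain, hEi, hsq]
    apply le_of_eq
    rw [Real.exp_neg]
    have h0 : Real.exp ((1/2):ℝ) ≠ 0 := Real.exp_ne_zero _
    have hpi : (π:ℝ) ≠ 0 := Real.pi_ne_zero
    field_simp
    ring
  · rw [hmain]
    have hc := exp_quarter_lb
    have hE2 : Real.exp (-(1/2):ℝ) = Real.exp (-(1/4))^2 := by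
      rw [← Real.exp_nat_mul]
      congr 1
      norm_num
    have hub : Real.exp (-(1/2):ℝ) ≤ (0.6065306598:ℝ) := by
      rw [hE2]
      refine le_trans (pow_le_pow_left₀ (Real.exp_nonneg _) hc.2 2) (by norm_num)
    have hpi := Real.pi_gt_d6
    have hXpos : (0:ℝ) ≤ Real.exp (-(1/2)) := Real.exp_nonneg _
    have hfrac : 1/(2*π) ≤ 1/(2*3.141592) := by
      apply one_div_le_one_div_of_le (by norm_num)
      linarith
    have h1 : (1/(2*π))*(4*Real.exp (-(1/2)))
        ≤ (1/(2*3.141592))*(4*(0.6065306598:ℝ)) := by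
      apply mul_le_mul hfrac (by linarith) (by linarith) (by norm_num)
    have h2 : 3*(2*Real.exp (-(1/2))) ≤ 3*(2*(0.6065306598:ℝ)) := by linarith
    have h3 : (-3)*(∫ t in Set.Ioi (1/2:ℝ), Real.exp (-t)/t) ≤ (-3)*(5597734/10000000:ℝ) := by
      linarith
    have : (1/(2*3.141592))*(4*(0.6065306598:ℝ)) + 3*(2*(0.6065306598:ℝ))
        + (-3)*(5597734/10000000:ℝ) < 2.346 := by norm_num
    linarith
end

section
/- As s → 1⁺, the quantity (s-1)∫_2^∞ (log log t)/t^s dt + log(s-1) tends to -γ, where γ is the Euler–Mascheroni constant. -/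
open Real Set Filter MeasureTheory
open scoped Topology

lemma abs_log_le (x : ℝ) (hx : 0 < x) : |Real.log x| ≤ 2 * (x ^ ((2:ℝ)⁻¹) + x ^ (-(2:ℝ)⁻¹)) := by
  rcases le_or_gt 1 x with h | h
  · rw [abs_of_nonneg (Real.log_nonneg h)]
    have := Real.log_le_rpow_div hx.le (by norm_num : (0:ℝ) < 2⁻¹)
    have h2 : (0:ℝ) ≤ x ^ (-(2:ℝ)⁻¹) := (Real.rpow_pos_of_pos hx _).le
    rw [div_eq_mul_inv, inv_inv] at this
    nlinarith [Real.rpow_pos_of_pos hx ((2:ℝ)⁻¹)]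
  · rw [abs_of_nonpos (Real.log_nonpos hx.le h.le)]
    have hinv : (0:ℝ) < x⁻¹ := by positivity
    have := Real.log_le_rpow_div hinv.le (by norm_num : (0:ℝ) < 2⁻¹)
    rw [Real.log_inv, div_eq_mul_inv, inv_inv, Real.inv_rpow hx.le, ← Real.rpow_neg hx.le] at this
    nlinarith [Real.rpow_pos_of_pos hx ((2:ℝ)⁻¹), Real.rpow_pos_of_pos hx (-(2:ℝ)⁻¹)]

lemma integrable_exp_neg_log : IntegrableOn (fun x : ℝ => Real.exp (-x) * Real.log x) (Ioi 0) := by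
  have h1 := Real.GammaIntegral_convergent (by norm_num : (0:ℝ) < 3/2)
  have h2 := Real.GammaIntegral_convergent (by norm_num : (0:ℝ) < 1/2)
  have hmaj : IntegrableOn
      (fun x : ℝ => 2 * (Real.exp (-x) * x ^ ((3:ℝ)/2 - 1)) + 2 * (Real.exp (-x) * x ^ ((1:ℝ)/2 - 1)))
      (Ioi 0) := ((h1.const_mul 2).add (h2.const_mul 2))
  refine hmaj.integrable.mono' ?_ ?_
  · refine (ContinuousOn.mul ?_ ?_).aestronglyMeasurable measurableSet_Ioi
    · exact (Real.continuous_exp.comp continuous_neg).continuousOn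
    · exact fun x hx => (Real.continuousAt_log (ne_of_gt hx)).continuousWithinAt
  · filter_upwards [ae_restrict_mem measurableSet_Ioi] with x hx
    have hx : (0:ℝ) < x := hx
    rw [norm_mul, Real.norm_eq_abs, Real.norm_eq_abs, abs_of_pos (Real.exp_pos _)]
    have := abs_log_le x hx
    have h3 : ((3:ℝ)/2 - 1) = (2:ℝ)⁻¹ := by norm_num
    have h4 : ((1:ℝ)/2 - 1) = -(2:ℝ)⁻¹ := by norm_num
    rw [h3, h4]
    nlinarith [Real.exp_pos (-x), mul_le_mul_of_nonneg_left this (Real.exp_pos (-x)).le]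

lemma integral_exp_neg_log : ∫ x in Ioi (0:ℝ), Real.exp (-x) * Real.log x = -Real.eulerMascheroniConstant := by
  have h1 : HasDerivAt Complex.GammaIntegral
      (∫ t : ℝ in Ioi 0, (t:ℂ) ^ ((1:ℂ) - 1) * (Real.log t * Real.exp (-t))) 1 :=
    Complex.hasDerivAt_GammaIntegral (by norm_num)
  have hI : (∫ t : ℝ in Ioi 0, (t:ℂ) ^ ((1:ℂ) - 1) * (Real.log t * Real.exp (-t)))
      = ((∫ x in Ioi (0:ℝ), Real.exp (-x) * Real.log x : ℝ) : ℂ) := by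
    rw [show ((∫ x in Ioi (0:ℝ), Real.exp (-x) * Real.log x : ℝ) : ℂ)
        = ∫ x in Ioi (0:ℝ), ((Real.exp (-x) * Real.log x : ℝ) : ℂ) from integral_ofReal.symm]
    refine setIntegral_congr_fun measurableSet_Ioi fun x hx => ?_
    push_cast
    rw [sub_self, Complex.cpow_zero, one_mul]
    ring
  rw [hI] at h1
  have h2 : HasDerivAt Complex.Gamma
      ((∫ x in Ioi (0:ℝ), Real.exp (-x) * Real.log x : ℝ) : ℂ) 1 := by
    refine h1.congr_of_eventuallyEq ?_
    have : {s : ℂ | 0 < s.re} ∈ 𝓝 (1:ℂ) := by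
      refine (isOpen_lt continuous_const Complex.continuous_re).mem_nhds (by norm_num)
    filter_upwards [this] with s hs
    exact Complex.Gamma_eq_integral hs
  have h3 : HasDerivAt (fun x : ℝ => Complex.Gamma x)
      ((∫ x in Ioi (0:ℝ), Real.exp (-x) * Real.log x : ℝ) : ℂ) 1 := h2.comp_ofReal
  have h4 : HasDerivAt (fun x : ℝ => ((Real.Gamma x : ℂ)))
      ((-Real.eulerMascheroniConstant : ℝ) : ℂ) 1 := Real.hasDerivAt_Gamma_one.ofReal_comp
  have h5 : (fun x : ℝ => Complex.Gamma x) = fun x : ℝ => ((Real.Gamma x : ℂ)) := by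
    funext x; exact Complex.Gamma_ofReal x
  rw [h5] at h3
  exact_mod_cast h4.unique h3 |>.symm

lemma loglog_integrable {s : ℝ} (hs : 1 < s) :
    IntegrableOn (fun t : ℝ => Real.log (Real.log t) / t ^ s) (Ioi 2) := by
  set ε : ℝ := (s - 1) / 2 with hε
  have hε0 : 0 < ε := by rw [hε]; linarith
  have hC : (0:ℝ) ≤ |Real.log (Real.log 2)| := abs_nonneg _
  set C : ℝ := |Real.log (Real.log 2)|
  have hmaj : IntegrableOn (fun t : ℝ => ε⁻¹ * t ^ (ε - s) + C * t ^ (-s)) (Ioi 2) := by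
    refine (((integrableOn_Ioi_rpow_of_lt ?_ (by norm_num : (0:ℝ) < 2)).const_mul _).add
      ((integrableOn_Ioi_rpow_of_lt ?_ (by norm_num : (0:ℝ) < 2)).const_mul _)) <;> [skip; skip]
    · rw [hε]; linarith
    · linarith
  refine hmaj.integrable.mono' ?_ ?_
  · refine (ContinuousOn.div ?_ ?_ ?_).aestronglyMeasurable measurableSet_Ioi
    · intro t ht
      have ht2 : (2:ℝ) < t := ht
      have hlt : (0:ℝ) < Real.log t := Real.log_pos (by linarith)
      exact ((Real.continuousAt_log hlt.ne').comp
        (Real.continuousAt_log (by linarith))).continuousWithinAt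
    · intro t ht
      have ht2 : (2:ℝ) < t := ht
      exact (Real.continuousAt_rpow_const t s (Or.inl (by linarith))).continuousWithinAt
    · intro t ht
      have ht2 : (2:ℝ) < t := ht
      exact (Real.rpow_pos_of_pos (by linarith) s).ne'
  · filter_upwards [ae_restrict_mem measurableSet_Ioi] with t ht
    have ht2 : (2:ℝ) < t := ht
    have ht0 : (0:ℝ) < t := by linarith
    have hts : (0:ℝ) < t ^ s := Real.rpow_pos_of_pos ht0 s
    have hlog2 : (0:ℝ) < Real.log 2 := Real.log_pos (by norm_num)
    have hlt : Real.log 2 ≤ Real.log t := Real.log_le_log (by norm_num) ht2.le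
    have hlt0 : (0:ℝ) < Real.log t := lt_of_lt_of_le hlog2 hlt
    -- |log (log t)| ≤ log t + C
    have key : |Real.log (Real.log t)| ≤ Real.log t + C := by
      rcases le_or_gt 1 (Real.log t) with h | h
      · rw [abs_of_nonneg (Real.log_nonneg h)]
        have := Real.log_le_sub_one_of_pos hlt0
        linarith
      · have h1 : Real.log (Real.log t) ≤ 0 := Real.log_nonpos hlt0.le h.le
        rw [abs_of_nonpos h1]
        have h2 : Real.log (Real.log 2) ≤ Real.log (Real.log t) := Real.log_le_log hlog2 hlt
        have h3 : -C ≤ Real.log (Real.log 2) := neg_abs_le _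
        linarith
    have hlogle : Real.log t ≤ t ^ ε / ε := Real.log_le_rpow_div ht0.le hε0
    rw [Real.norm_eq_abs, abs_div, abs_of_pos hts]
    have step : |Real.log (Real.log t)| / t ^ s ≤ (t ^ ε / ε + C) / t ^ s := by
      gcongr
      linarith
    refine step.trans (le_of_eq ?_)
    rw [add_div, div_div, Real.rpow_neg ht0.le, Real.rpow_sub ht0]
    field_simp

lemma subst_eq {s : ℝ} (hs : 1 < s) :
    (s - 1) * (∫ t in Ioi (2:ℝ), Real.log (Real.log t) / t ^ s)
      = (∫ y in Ioi ((s - 1) * Real.log 2), Real.exp (-y) * Real.log y)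
        - Real.log (s - 1) * (2:ℝ) ^ (1 - s) := by
  set c : ℝ := s - 1 with hcdef
  have hc : 0 < c := by rw [hcdef]; linarith
  set a : ℝ := c * Real.log 2 with hadef
  have hlog2 : (0:ℝ) < Real.log 2 := Real.log_pos (by norm_num)
  have ha : 0 < a := mul_pos hc hlog2
  set f : ℝ → ℝ := fun x => Real.exp (x / c) with hfdef
  set f' : ℝ → ℝ := fun x => Real.exp (x / c) / c with hf'def
  set g : ℝ → ℝ := fun t => Real.log (Real.log t) / t ^ s with hgdef
  have hfa : f a = 2 := by
    rw [hfdef]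
    show Real.exp (c * Real.log 2 / c) = 2
    rw [mul_comm, mul_div_assoc, div_self hc.ne', mul_one, Real.exp_log (by norm_num : (0:ℝ) < 2)]
  -- pointwise identity
  have hpt : ∀ x ∈ Ioi (0:ℝ), g (f x) * f' x
      = (Real.exp (-x) * Real.log x - Real.log c * Real.exp (-x)) / c := by
    intro x hx
    have hx0 : (0:ℝ) < x := hx
    have h1 : Real.log (f x) = x / c := by rw [hfdef]; exact Real.log_exp _
    have h2 : f x ^ s = Real.exp (x / c * s) := by
      rw [hfdef]; show Real.exp (x / c) ^ s = _
      rw [Real.rpow_def_of_pos (Real.exp_pos _), Real.log_exp]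
    have h3 : Real.exp (-x) = Real.exp (x / c) / Real.exp (x / c * s) := by
      rw [← Real.exp_sub]
      congr 1
      field_simp [hcdef]
      ring
    rw [hgdef, hf'def]
    simp only [h1, h2]
    rw [Real.log_div hx0.ne' hc.ne', h3]
    have e1 := Real.exp_ne_zero (x / c)
    have e2 := Real.exp_ne_zero (x / c * s)
    field_simp
  -- continuity of g on Ioi 2
  have hcont_g : ContinuousOn g (Ioi 2) := by
    refine ContinuousOn.div ?_ ?_ ?_
    · intro t ht
      have ht2 : (2:ℝ) < t := ht
      have hlt : (0:ℝ) < Real.log t := Real.log_pos (by linarith)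
      exact ((Real.continuousAt_log hlt.ne').comp
        (Real.continuousAt_log (by linarith))).continuousWithinAt
    · intro t ht
      have ht2 : (2:ℝ) < t := ht
      exact (Real.continuousAt_rpow_const t s (Or.inl (by linarith))).continuousWithinAt
    · intro t ht
      have ht2 : (2:ℝ) < t := ht
      exact (Real.rpow_pos_of_pos (by linarith) s).ne'
  -- images
  have himg_Ioi : f '' Ioi a ⊆ Ioi 2 := by
    rintro _ ⟨x, hx, rfl⟩
    have : f a < f x := Real.exp_lt_exp.mpr (div_lt_div_of_pos_right hx hc)
    rwa [hfa] at this
  have himg_Ici : f '' Ici a ⊆ Ici 2 := by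
    rintro _ ⟨x, hx, rfl⟩
    have : f a ≤ f x := Real.exp_le_exp.mpr (div_le_div_of_nonneg_right hx hc.le)
    rwa [hfa] at this
  -- integrabilities
  have i1 : IntegrableOn (fun x : ℝ => Real.exp (-x) * Real.log x) (Ioi a) :=
    integrable_exp_neg_log.mono_set (Ioi_subset_Ioi ha.le)
  have i2 : IntegrableOn (fun x : ℝ => Real.exp (-x)) (Ioi a) := by
    simpa using exp_neg_integrableOn_Ioi a one_pos
  have hint : IntegrableOn
      (fun x : ℝ => (Real.exp (-x) * Real.log x - Real.log c * Real.exp (-x)) / c) (Ici a) := by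
    rw [integrableOn_Ici_iff_integrableOn_Ioi]
    exact (i1.sub (i2.const_mul _)).div_const c
  have hg2 : IntegrableOn (fun x => (g ∘ f) x * f' x) (Ici a) := by
    refine hint.congr_fun (fun x hx => ?_) measurableSet_Ici
    exact (hpt x (lt_of_lt_of_le ha hx)).symm
  -- change of variables
  have key : (∫ x in Ioi a, (g ∘ f) x * f' x) = ∫ u in Ioi (f a), g u := by
    refine MeasureTheory.integral_comp_mul_deriv_Ioi ?_ ?_ ?_ (hcont_g.mono himg_Ioi)
      (((Iff.mpr integrableOn_Ici_iff_integrableOn_Ioi (loglog_integrable hs)).mono_set himg_Ici)) hg2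
    · exact (Real.continuous_exp.comp (continuous_id.div_const c)).continuousOn
    · exact Real.tendsto_exp_atTop.comp (tendsto_id.atTop_div_const hc)
    · intro x _
      have h := (Real.hasDerivAt_exp (x / c)).comp x ((hasDerivAt_id x).div_const c)
      rw [hf'def]
      simp only
      rw [div_eq_mul_one_div]
      exact (h.congr_deriv rfl).hasDerivWithinAt.congr (fun y _ => by simp [hfdef]) (by simp [hfdef])
  rw [hfa] at key
  have lhs_eq : (∫ x in Ioi a, (g ∘ f) x * f' x)
      = ∫ x in Ioi a, (Real.exp (-x) * Real.log x - Real.log c * Real.exp (-x)) / c := by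
    refine setIntegral_congr_fun measurableSet_Ioi (fun x hx => ?_)
    exact hpt x (lt_trans ha hx)
  rw [lhs_eq] at key
  have expand : (∫ x in Ioi a, (Real.exp (-x) * Real.log x - Real.log c * Real.exp (-x)) / c)
      = ((∫ x in Ioi a, Real.exp (-x) * Real.log x) - Real.log c * Real.exp (-a)) / c := by
    rw [integral_div, integral_sub i1 (i2.const_mul _), MeasureTheory.integral_const_mul, integral_exp_neg_Ioi]
  rw [expand] at key
  have h2pow : Real.exp (-a) = (2:ℝ) ^ (1 - s) := by
    rw [Real.rpow_def_of_pos (by norm_num : (0:ℝ) < 2)]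
    congr 1
    rw [hadef, hcdef]
    ring
  rw [h2pow] at key
  rw [← key, hcdef]
  field_simp
  exact mul_div_cancel_left₀ _ (by linarith : s - 1 ≠ 0)

lemma limit1 : Tendsto (fun s : ℝ => ∫ y in Ioi ((s - 1) * Real.log 2), Real.exp (-y) * Real.log y)
    (𝓝[>] 1) (𝓝 (-Real.eulerMascheroniConstant)) := by
  set G : ℝ → ℝ := fun y => Real.exp (-y) * Real.log y with hG
  have hlog2 : (0:ℝ) < Real.log 2 := Real.log_pos (by norm_num)
  have ha_tendsto : Tendsto (fun s : ℝ => (s - 1) * Real.log 2) (𝓝[>] 1) (𝓝 0) := by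
    have : Tendsto (fun s : ℝ => (s - 1) * Real.log 2) (𝓝 1) (𝓝 0) := by
      have := ((continuous_sub_right (1:ℝ)).tendsto 1).mul_const (Real.log 2)
      simpa using this
    exact this.mono_left nhdsWithin_le_nhds
  have key : Tendsto (fun s : ℝ => ∫ y in Ioi (0:ℝ), (Ioi ((s - 1) * Real.log 2)).indicator G y)
      (𝓝[>] 1) (𝓝 (∫ y in Ioi (0:ℝ), G y)) := by
    refine tendsto_integral_filter_of_dominated_convergence (fun y => ‖G y‖) ?_ ?_
      integrable_exp_neg_log.norm ?_
    · filter_upwards with s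
      exact integrable_exp_neg_log.aestronglyMeasurable.indicator measurableSet_Ioi
    · filter_upwards with s
      filter_upwards with y
      exact norm_indicator_le_norm_self G y
    · filter_upwards [ae_restrict_mem measurableSet_Ioi] with y hy
      have hy0 : (0:ℝ) < y := hy
      have hev : ∀ᶠ s in 𝓝[>] (1:ℝ), (s - 1) * Real.log 2 < y :=
        ha_tendsto.eventually_lt_const hy0
      refine Tendsto.congr' ?_ tendsto_const_nhds
      filter_upwards [hev] with s hs
      exact (Set.indicator_of_mem (mem_Ioi.mpr hs) G).symm
  rw [integral_exp_neg_log] at key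
  refine Tendsto.congr' ?_ key
  filter_upwards [self_mem_nhdsWithin] with s hs
  have hs1 : (1:ℝ) < s := hs
  have hb : 0 < (s - 1) * Real.log 2 := mul_pos (by linarith) hlog2
  rw [setIntegral_indicator measurableSet_Ioi,
    inter_eq_right.mpr (Ioi_subset_Ioi hb.le)]

lemma limit2 : Tendsto (fun s : ℝ => Real.log (s - 1) * (1 - (2:ℝ) ^ (1 - s)))
    (𝓝[>] 1) (𝓝 0) := by
  have hlog2 : (0:ℝ) < Real.log 2 := Real.log_pos (by norm_num)
  have hshift : Tendsto (fun s : ℝ => s - 1) (𝓝[>] 1) (𝓝[>] 0) := by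
    rw [tendsto_nhdsWithin_iff]
    constructor
    · have : Tendsto (fun s : ℝ => s - 1) (𝓝 1) (𝓝 0) := by
        simpa using (continuous_sub_right (1:ℝ)).tendsto 1
      exact this.mono_left nhdsWithin_le_nhds
    · filter_upwards [self_mem_nhdsWithin] with s hs
      exact sub_pos.mpr (mem_Ioi.mp hs)
  have hxx : Tendsto (fun x : ℝ => Real.log x * x) (𝓝[>] 0) (𝓝 0) := by
    have := tendsto_log_mul_rpow_nhdsGT_zero one_pos
    refine this.congr' ?_
    filter_upwards [self_mem_nhdsWithin] with x hx
    rw [Real.rpow_one]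
  have hmain : Tendsto (fun s : ℝ => -(Real.log (s - 1) * (s - 1)) * Real.log 2)
      (𝓝[>] 1) (𝓝 0) := by
    have := ((hxx.comp hshift).neg).mul_const (Real.log 2)
    simpa using this
  refine squeeze_zero_norm' ?_ hmain
  filter_upwards [Ioo_mem_nhdsGT_of_mem (by norm_num : (1:ℝ) ∈ Ico 1 2)] with s hs
  obtain ⟨hs1, hs2⟩ := hs
  set t : ℝ := (s - 1) * Real.log 2 with ht
  have ht0 : 0 < t := by rw [ht]; exact mul_pos (by linarith) hlog2
  have hpow : (2:ℝ) ^ (1 - s) = Real.exp (-t) := by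
    rw [Real.rpow_def_of_pos (by norm_num : (0:ℝ) < 2)]
    congr 1
    rw [ht]; ring
  have h1 : Real.exp (-t) ≤ 1 := Real.exp_le_one_iff.mpr (by linarith)
  have h2 : 1 - Real.exp (-t) ≤ t := by
    have := Real.add_one_le_exp (-t)
    linarith
  have hlogneg : Real.log (s - 1) ≤ 0 := Real.log_nonpos (by linarith) (by linarith)
  rw [hpow, Real.norm_eq_abs, abs_mul, abs_of_nonpos hlogneg,
    abs_of_nonneg (by linarith : (0:ℝ) ≤ 1 - Real.exp (-t))]
  have : -Real.log (s - 1) * (1 - Real.exp (-t)) ≤ -Real.log (s - 1) * t :=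
    mul_le_mul_of_nonneg_left h2 (by linarith)
  calc -Real.log (s - 1) * (1 - Real.exp (-t)) ≤ -Real.log (s - 1) * t := this
    _ = -(Real.log (s - 1) * (s - 1)) * Real.log 2 := by rw [ht]; ring


/-- As `s → 1⁺`, `(s-1)∫_2^∞ (log log t)/t^s dt + log(s-1)` tends to `-γ`. -/
theorem tendsto_loglog_integral :
    Filter.Tendsto
      (fun s : ℝ =>
        (s - 1) * (∫ t in Set.Ioi (2 : ℝ), Real.log (Real.log t) / t ^ s) +
          Real.log (s - 1))
      (nhdsWithin 1 (Set.Ioi 1)) (nhds (-Real.eulerMascheroniConstant)) := by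
  have h := limit1.add limit2
  rw [add_zero] at h
  refine Tendsto.congr' ?_ h
  filter_upwards [self_mem_nhdsWithin] with s hs
  have hs1 : (1:ℝ) < s := hs
  rw [subst_eq hs1]
  ring
end
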